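/- arXiv:2303.05055 — 4 statements merged into one kernel-verified Lean document; each statement's English description precedes it below -/
import Mathlib

section
/- Let m, n be coprime odd positive integers and q an integer. Define G(χ_n, q) = ((1-i)/2 + (-1|n)(1+i)/2)·Σ_{j mod n} (j|n) e(jq/n). Then G(χ_{mn}, q) = G(χ_m, q)·G(χ_n, q). -/
/-!
Write `j = a n + b m` with `a` mod `m` and `b` mod `n` (Chinese remainder theorem). Then
`e(jq/mn) = e(aq/m) e(bq/n)` and `(j|mn) = (a|m)(n|m) (b|n)(m|n)`, so the unnormalized sums
satisfy `S_{mn} = (n|m)(m|n) S_m S_n`. By quadratic reciprocity the sign `(n|m)(m|n)` is `-1`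
exactly when `m ≡ n ≡ 3 (mod 4)`, which is exactly when the normalizing factors (`1` for
`n ≡ 1` and `-i` for `n ≡ 3 (mod 4)`) fail to be multiplicative.
-/

/-- The normalized quadratic Gauss sum `G(χ_n, q)`. -/
noncomputable def Gsum (n : ℕ) (q : ℤ) : ℂ :=
  ((1 - Complex.I) / 2 + (jacobiSym (-1 : ℤ) n : ℂ) * (1 + Complex.I) / 2) *
    ∑ j ∈ Finset.range n, (jacobiSym (j : ℤ) n : ℂ) *
      Complex.exp (2 * Real.pi * Complex.I * (j : ℂ) * (q : ℂ) / (n : ℂ))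

open Finset Complex

noncomputable def expFrac (n : ℕ) (q : ℤ) (j : ℕ) : ℂ :=
  exp (2 * Real.pi * I * j * q / n)

noncomputable def jacobiGaussSum (n : ℕ) (q : ℤ) : ℂ :=
  ∑ j ∈ range n, (jacobiSym j n : ℂ) * expFrac n q j

noncomputable def gaussNormalizer (n : ℕ) : ℂ :=
  (1 - I) / 2 + (jacobiSym (-1) n : ℂ) * (1 + I) / 2

lemma Gsum_eq_gaussNormalizer_mul (n : ℕ) (q : ℤ) :
    Gsum n q = gaussNormalizer n * jacobiGaussSum n q :=
  rfl

lemma expFrac_periodic (n : ℕ) (q : ℤ) : Function.Periodic (expFrac n q) n := by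
  intro j
  rcases eq_or_ne n 0 with rfl | hn
  · rfl
  have hn' : (n : ℂ) ≠ 0 := Nat.cast_ne_zero.mpr hn
  have h : 2 * (Real.pi : ℂ) * I * ((j + n : ℕ) : ℂ) * q / n
      = 2 * Real.pi * I * j * q / n + (q : ℂ) * (2 * Real.pi * I) := by
    push_cast
    field_simp
  rw [expFrac, h, exp_add, exp_int_mul_two_pi_mul_I, mul_one, expFrac]

lemma expFrac_mul_add_mul {m n : ℕ} (hm : m ≠ 0) (hn : n ≠ 0) (q : ℤ) (a b : ℕ) :
    expFrac (m * n) q (a * n + b * m) = expFrac m q a * expFrac n q b := by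
  have hm' : (m : ℂ) ≠ 0 := Nat.cast_ne_zero.mpr hm
  have hn' : (n : ℂ) ≠ 0 := Nat.cast_ne_zero.mpr hn
  rw [expFrac, expFrac, expFrac, ← exp_add]
  congr 1
  push_cast
  field_simp

lemma jacobiSym_mul_add_mul (a b : ℤ) (m n : ℕ) [NeZero m] [NeZero n] :
    jacobiSym (a * n + b * m) (m * n)
      = jacobiSym a m * jacobiSym n m * (jacobiSym b n * jacobiSym m n) := by
  rw [jacobiSym.mul_right]
  congr 1
  · rw [jacobiSym.mod_left' (Int.add_mul_emod_self_right (a * n) b m), jacobiSym.mul_left]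
  · rw [add_comm, jacobiSym.mod_left' (Int.add_mul_emod_self_right (b * m) a n),
      jacobiSym.mul_left]

lemma eq_and_eq_of_mul_add_mul_modEq {m n a a' b b' : ℕ} (hco : m.Coprime n)
    (ha : a < m) (ha' : a' < m) (hb : b < n) (hb' : b' < n)
    (h : a * n + b * m ≡ a' * n + b' * m [MOD m * n]) : a = a' ∧ b = b' := by
  have hm : a * n ≡ a' * n [MOD m] := by
    simpa [Nat.ModEq, Nat.add_mul_mod_self_right] using h.of_mul_right n
  have hn : b * m ≡ b' * m [MOD n] := by
    simpa [Nat.ModEq, Nat.add_mul_mod_self_right] using h.of_mul_left m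
  exact ⟨(hm.cancel_right_of_coprime hco).eq_of_lt_of_lt ha ha',
    (hn.cancel_right_of_coprime hco.symm).eq_of_lt_of_lt hb hb'⟩

lemma sum_range_mul_eq_sum_sum_of_coprime {M : Type*} [AddCommMonoid M] {m n : ℕ}
    (hco : m.Coprime n) {f : ℕ → M} (hf : Function.Periodic f (m * n)) :
    ∑ j ∈ range (m * n), f j = ∑ a ∈ range m, ∑ b ∈ range n, f (a * n + b * m) := by
  set crt : ℕ × ℕ → ℕ := fun p => (p.1 * n + p.2 * m) % (m * n)
  have hmaps : Set.MapsTo crt ↑(range m ×ˢ range n) ↑(range (m * n)) := by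
    rintro ⟨a, b⟩ hab
    simp only [coe_product, Set.mem_prod, mem_coe, mem_range] at hab
    simpa [crt] using Nat.mod_lt _ (Nat.mul_pos (by omega) (by omega))
  have hinj : Set.InjOn crt ↑(range m ×ˢ range n) := by
    rintro ⟨a, b⟩ hab ⟨a', b'⟩ hab' h
    simp only [coe_product, Set.mem_prod, mem_coe, mem_range] at hab hab'
    obtain ⟨rfl, rfl⟩ := eq_and_eq_of_mul_add_mul_modEq hco hab.1 hab'.1 hab.2 hab'.2 h
    rfl
  rw [← sum_product']
  refine (sum_nbij crt hmaps hinj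
    (surjOn_of_injOn_of_card_le crt hmaps hinj (by simp)) fun p _ => ?_).symm
  exact (hf.map_mod_nat _).symm

lemma jacobiGaussSum_mul {m n : ℕ} (hm : m ≠ 0) (hn : n ≠ 0) (hco : m.Coprime n) (q : ℤ) :
    jacobiGaussSum (m * n) q
      = (jacobiSym n m * jacobiSym m n : ℤ) * (jacobiGaussSum m q * jacobiGaussSum n q) := by
  have : NeZero m := ⟨hm⟩
  have : NeZero n := ⟨hn⟩
  have hper : Function.Periodic (fun j : ℕ => (jacobiSym j (m * n) : ℂ) * expFrac (m * n) q j)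
      (m * n) := fun j => by
    dsimp only
    rw [expFrac_periodic, jacobiSym.mod_left' (by push_cast; exact Int.add_emod_right _ _)]
  rw [jacobiGaussSum, sum_range_mul_eq_sum_sum_of_coprime hco hper, jacobiGaussSum,
    jacobiGaussSum, sum_mul_sum, mul_sum]
  refine sum_congr rfl fun a _ => ?_
  rw [mul_sum]
  refine sum_congr rfl fun b _ => ?_
  have hjac := jacobiSym_mul_add_mul a b m n
  push_cast at hjac ⊢
  rw [hjac, expFrac_mul_add_mul hm hn]
  push_cast
  ring

lemma gaussNormalizer_of_mod_four_eq_one {n : ℕ} (h : n % 4 = 1) : gaussNormalizer n = 1 := by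
  rw [gaussNormalizer, jacobiSym.at_neg_one (Nat.odd_iff.mpr (by omega)),
    ZMod.χ₄_nat_one_mod_four h]
  push_cast
  ring

lemma gaussNormalizer_of_mod_four_eq_three {n : ℕ} (h : n % 4 = 3) : gaussNormalizer n = -I := by
  rw [gaussNormalizer, jacobiSym.at_neg_one (Nat.odd_iff.mpr (by omega)),
    ZMod.χ₄_nat_three_mod_four h]
  push_cast
  ring

lemma gaussNormalizer_mul {m n : ℕ} (hm : Odd m) (hn : Odd n) (hco : m.Coprime n) :
    gaussNormalizer (m * n) * (jacobiSym n m * jacobiSym m n : ℤ)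
      = gaussNormalizer m * gaussNormalizer n := by
  have hsq_nm : jacobiSym n m ^ 2 = 1 :=
    jacobiSym.sq_one (by rw [Int.gcd_natCast_natCast]; exact hco.symm)
  have hsq_mn : jacobiSym m n ^ 2 = 1 :=
    jacobiSym.sq_one (by rw [Int.gcd_natCast_natCast]; exact hco)
  have hm4 : m % 4 = 1 ∨ m % 4 = 3 := by rw [Nat.odd_iff] at hm; omega
  have hn4 : n % 4 = 1 ∨ n % 4 = 3 := by rw [Nat.odd_iff] at hn; omega
  rcases hm4 with hm1 | hm3
  · have hmn : (m * n) % 4 = n % 4 := by rw [Nat.mul_mod, hm1, one_mul, Nat.mod_mod]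
    rw [jacobiSym.quadratic_reciprocity_one_mod_four hm1 hn, ← sq, hsq_nm,
      gaussNormalizer_of_mod_four_eq_one hm1]
    rcases hn4 with hn1 | hn3
    · rw [gaussNormalizer_of_mod_four_eq_one (hmn.trans hn1),
        gaussNormalizer_of_mod_four_eq_one hn1]
      simp
    · rw [gaussNormalizer_of_mod_four_eq_three (hmn.trans hn3),
        gaussNormalizer_of_mod_four_eq_three hn3]
      simp
  rcases hn4 with hn1 | hn3
  · have hmn : (m * n) % 4 = m % 4 := by rw [Nat.mul_mod, hn1, mul_one, Nat.mod_mod]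
    rw [jacobiSym.quadratic_reciprocity_one_mod_four hn1 hm, ← sq, hsq_mn,
      gaussNormalizer_of_mod_four_eq_one hn1, gaussNormalizer_of_mod_four_eq_three hm3,
      gaussNormalizer_of_mod_four_eq_three (hmn.trans hm3)]
    simp
  · have hmn : (m * n) % 4 = 1 := by rw [Nat.mul_mod, hm3, hn3]
    rw [jacobiSym.quadratic_reciprocity_three_mod_four hm3 hn3, mul_neg, ← sq, hsq_nm,
      gaussNormalizer_of_mod_four_eq_one hmn, gaussNormalizer_of_mod_four_eq_three hm3,
      gaussNormalizer_of_mod_four_eq_three hn3]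
    simp

theorem stmt1_general (m n : ℕ) (hm : Odd m) (hn : Odd n)
    (hco : Nat.Coprime m n) (q : ℤ) :
    Gsum (m * n) q = Gsum m q * Gsum n q := by
  simp only [Gsum_eq_gaussNormalizer_mul]
  rw [jacobiGaussSum_mul hm.pos.ne' hn.pos.ne' hco, ← mul_assoc, gaussNormalizer_mul hm hn hco]
  ring

/-- For coprime odd positive `m, n`, `G(χ_{mn}, q) = G(χ_m, q) G(χ_n, q)`. -/
theorem stmt1 (m n : ℕ) (hm : Odd m) (hn : Odd n) (hmpos : 0 < m) (hnpos : 0 < n)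
    (hco : Nat.Coprime m n) (q : ℤ) :
    Gsum (m * n) q = Gsum m q * Gsum n q :=
  stmt1_general m n hm hn hco q
end

section
/- Let l ≡ 3 (mod 4) be an integer and q a positive integer. For the Kronecker symbol χ^{(4l)} = (4l|·) modulo 4l, the Gauss sum τ(χ^{(4l)}, q) = Σ_{j mod 4l} χ^{(4l)}(j)e(jq/(4l)) satisfies: τ(χ^{(4l)}, q) = 0 if q is even; τ(χ^{(4l)}, q) = -2i·τ(χ_l, q) if q ≡ 1 (mod 4); and τ(χ^{(4l)}, q) = 2i·τ(χ_l, q) if q ≡ 3 (mod 4). -/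
/-!
For `l ≡ 3 (mod 4)`, quadratic reciprocity gives `(4l | j) = χ₄(j) (j | l)`. Writing
`j ≡ l a + 4 b (mod 4l)` (Chinese remainder theorem) splits `e(jq/4l)` as `e(aq/4) e(bq/l)`,
`χ₄(j) = χ₄(l) χ₄(a) = -χ₄(a)` and `(j | l) = (b | l)`, so
`τ(χ^{(4l)}, q) = -τ(χ₄, q) τ(χ_l, q)`, and `τ(χ₄, q) = i^q - (-i)^q`.
-/

/-- The Kronecker symbol `(m | n)` for `n : ℕ`: multiplicative in `n`, with
`(m | 2) = χ₈(m)` and `(m | odd part)` the Jacobi symbol; `(m | 0) = 1` iff `m = ±1`. -/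
noncomputable def kronSym (m : ℤ) (n : ℕ) : ℤ :=
  if n = 0 then (if m = 1 ∨ m = -1 then 1 else 0)
  else (ZMod.χ₈ (m : ZMod 8)) ^ (n.factorization 2) * jacobiSym m (n / 2 ^ (n.factorization 2))

open Finset Complex
open scoped Real

section ChineseRemainder

variable {m n : ℕ}

lemma injOn_mul_add_mul_mod (h : m.Coprime n) :
    Set.InjOn (fun p : ℕ × ℕ => (n * p.1 + m * p.2) % (m * n)) ↑(range m ×ˢ range n) := by
  rintro ⟨a, b⟩ hab ⟨a', b'⟩ hab' heq
  simp only [coe_product, coe_range, Set.mem_prod, Set.mem_Iio] at hab hab'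
  have hmn : n * a + m * b ≡ n * a' + m * b' [MOD m * n] := heq
  have ha : a ≡ a' [MOD m] := Nat.ModEq.cancel_left_of_coprime (c := n) h <| by
    simpa [Nat.ModEq, Nat.add_mul_mod_self_left] using hmn.of_mul_right n
  have hb : b ≡ b' [MOD n] := Nat.ModEq.cancel_left_of_coprime (c := m) h.symm <| by
    simpa [Nat.ModEq, Nat.mul_add_mod] using hmn.of_mul_left m
  exact Prod.ext (ha.eq_of_lt_of_lt hab.1 hab'.1) (hb.eq_of_lt_of_lt hab.2 hab'.2)

lemma sum_range_mul_eq_sum_sum_mod {M : Type*} [AddCommMonoid M] (h : m.Coprime n)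
    (F : ℕ → M) :
    ∑ j ∈ range (m * n), F j = ∑ a ∈ range m, ∑ b ∈ range n, F ((n * a + m * b) % (m * n)) := by
  rw [← sum_product']
  have hmaps : Set.MapsTo (fun p : ℕ × ℕ => (n * p.1 + m * p.2) % (m * n))
      ↑(range m ×ˢ range n) ↑(range (m * n)) := by
    rintro ⟨a, b⟩ hab
    simp only [coe_product, coe_range, Set.mem_prod, Set.mem_Iio] at hab ⊢
    exact Nat.mod_lt _ (Nat.mul_pos (by omega) (by omega))
  exact (sum_nbij _ (fun p hp => hmaps hp) (injOn_mul_add_mul_mod h)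
    (surjOn_of_injOn_of_card_le _ hmaps (injOn_mul_add_mul_mod h) (by simp))
    (fun _ _ => rfl)).symm

end ChineseRemainder

lemma exp_two_pi_I_mul_mod_div (j q N : ℕ) :
    exp (2 * π * I * ((j % N : ℕ) : ℂ) * q / N) = exp (2 * π * I * j * q / N) := by
  rcases eq_or_ne N 0 with rfl | hN
  · simp
  have hj : (j : ℂ) = (j % N : ℕ) + (j / N : ℕ) * N := by
    exact_mod_cast (Nat.mod_add_div' j N).symm
  have harg : 2 * π * I * j * q / N
      = 2 * π * I * ((j % N : ℕ) : ℂ) * q / N + ((j / N * q : ℕ) : ℂ) * (2 * π * I) := by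
    rw [hj]
    push_cast
    field_simp
  rw [harg, exp_add, exp_nat_mul_two_pi_mul_I, mul_one]

lemma exp_two_pi_I_mul_crt_div {m n : ℕ} (hm : m ≠ 0) (hn : n ≠ 0) (a b q : ℕ) :
    exp (2 * π * I * (((n * a + m * b) % (m * n) : ℕ) : ℂ) * q / ((m * n : ℕ) : ℂ)) =
      exp (2 * π * I * a * q / m) * exp (2 * π * I * b * q / n) := by
  rw [exp_two_pi_I_mul_mod_div, ← exp_add]
  congr 1
  push_cast
  field_simp

lemma exp_two_pi_I_mul_div_four (a q : ℕ) : exp (2 * π * I * a * q / 4) = I ^ (a * q) := by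
  conv_rhs => rw [← exp_pi_div_two_mul_I, ← exp_nat_mul]
  push_cast
  ring_nf

lemma sum_χ₄_mul_exp (q : ℕ) :
    ∑ a ∈ range 4, (ZMod.χ₄ a : ℂ) * exp (2 * π * I * a * q / 4) = I ^ q - (-I) ^ q := by
  simp only [sum_range_succ, sum_range_zero, exp_two_pi_I_mul_div_four]
  have h3 : (-I) ^ q = I ^ (3 * q) := by rw [pow_mul]; simp [pow_succ]
  rw [h3]
  norm_num [sub_eq_add_neg]

lemma χ₄_natCast_mod_four_mul (x k : ℕ) : ZMod.χ₄ ((x % (4 * k) : ℕ) : ZMod 4) = ZMod.χ₄ x := by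
  rw [ZMod.χ₄_nat_mod_four, Nat.mod_mod_of_dvd _ (dvd_mul_right 4 k), ← ZMod.χ₄_nat_mod_four]

lemma χ₄_mul_add_four_mul {l : ℕ} (hl : l % 4 = 3) (a b : ℕ) :
    ZMod.χ₄ ((l * a + 4 * b : ℕ) : ZMod 4) = -ZMod.χ₄ a := by
  have h4 : (4 : ZMod 4) = 0 := rfl
  push_cast
  rw [h4, zero_mul, add_zero, map_mul, ZMod.χ₄_nat_three_mod_four hl, neg_one_mul]

lemma jacobiSym_natCast_mod_mul_left (x k l : ℕ) :
    jacobiSym ((x % (k * l) : ℕ) : ℤ) l = jacobiSym x l := by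
  rw [jacobiSym.mod_left, Int.natCast_mod,
    Int.emod_emod_of_dvd _ (by exact_mod_cast dvd_mul_left l k), ← jacobiSym.mod_left]

lemma jacobiSym_four_mul {l : ℕ} (hl : Odd l) (x : ℤ) : jacobiSym (4 * x) l = jacobiSym x l := by
  have h2 : (2 : ℤ).gcd l = 1 := by
    simpa [Int.gcd] using Nat.coprime_two_left.mpr hl
  rw [jacobiSym.mul_left, show (4 : ℤ) = 2 ^ 2 by norm_num, jacobiSym.sq_one' h2, one_mul]

lemma jacobiSym_mul_add_four_mul {l : ℕ} (hl : Odd l) (a b : ℕ) :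
    jacobiSym ((l * a + 4 * b : ℕ) : ℤ) l = jacobiSym b l := by
  rw [← jacobiSym_four_mul hl (b : ℤ)]
  refine jacobiSym.mod_left' ?_
  push_cast
  rw [Int.mul_add_emod_self_left]

lemma kronSym_four_mul {l : ℕ} (hl : l % 4 = 3) (j : ℕ) :
    kronSym (4 * l) j = ZMod.χ₄ j * jacobiSym j l := by
  have hl_odd : Odd l := Nat.odd_iff.mpr (by omega)
  rcases Nat.eq_zero_or_pos j with rfl | hj
  · have : ¬(4 * (l : ℤ) = 1 ∨ 4 * (l : ℤ) = -1) := by omega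
    simp [kronSym, this]
  rcases Nat.even_or_odd j with hj_even | hj_odd
  · have hχ₈ : ZMod.χ₈ ((4 * l : ℤ) : ZMod 8) = 0 := by
      rw [ZMod.χ₈_int_eq_if_mod_eight]
      simp [show 4 * (l : ℤ) % 2 = 0 by omega]
    have hχ₄ : ZMod.χ₄ (j : ZMod 4) = 0 := by
      rw [ZMod.χ₄_nat_eq_if_mod_four]
      simp [Nat.even_iff.mp hj_even]
    have hv : j.factorization 2 ≠ 0 :=
      (Nat.prime_two.factorization_pos_of_dvd hj.ne' hj_even.two_dvd).ne'
    rw [kronSym, if_neg hj.ne', hχ₈, hχ₄, zero_pow hv, zero_mul, zero_mul]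
  · have hv : j.factorization 2 = 0 :=
      Nat.factorization_eq_zero_of_not_dvd hj_odd.not_two_dvd_nat
    rw [kronSym, if_neg hj.ne', hv, pow_zero, one_mul, pow_zero, Nat.div_one,
      jacobiSym_four_mul hj_odd]
    rcases Nat.odd_mod_four_iff.mp (Nat.odd_iff.mp hj_odd) with hj4 | hj4
    · rw [jacobiSym.quadratic_reciprocity_one_mod_four' hl_odd hj4,
        ZMod.χ₄_nat_one_mod_four hj4, one_mul]
    · rw [jacobiSym.quadratic_reciprocity_three_mod_four hl hj4,
        ZMod.χ₄_nat_three_mod_four hj4, neg_one_mul]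

lemma gaussSum_kronSym_four_mul {l : ℕ} (hl : l % 4 = 3) (q : ℕ) :
    ∑ j ∈ range (4 * l), (kronSym (4 * (l : ℤ)) j : ℂ) *
        exp (2 * π * I * j * q / ((4 * l : ℕ) : ℂ)) =
      -(∑ a ∈ range 4, (ZMod.χ₄ a : ℂ) * exp (2 * π * I * a * q / 4)) *
        ∑ b ∈ range l, (jacobiSym b l : ℂ) * exp (2 * π * I * b * q / l) := by
  have hl_odd : Odd l := Nat.odd_iff.mpr (by omega)
  have hcop : Nat.Coprime 4 l := by simpa using (Nat.coprime_two_left.mpr hl_odd).pow_left 2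
  rw [sum_range_mul_eq_sum_sum_mod hcop, neg_mul, sum_mul, ← sum_neg_distrib]
  refine sum_congr rfl fun a _ => ?_
  rw [mul_sum, ← sum_neg_distrib]
  refine sum_congr rfl fun b _ => ?_
  rw [kronSym_four_mul hl, χ₄_natCast_mod_four_mul, jacobiSym_natCast_mod_mul_left,
    exp_two_pi_I_mul_crt_div (by norm_num) (by omega), χ₄_mul_add_four_mul hl,
    jacobiSym_mul_add_four_mul hl_odd]
  push_cast
  ring

theorem stmt4_general (l : ℕ) (hl : l % 4 = 3) (q : ℕ)
    (τ4 τl : ℂ)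
    (hτ4 : τ4 = ∑ j ∈ Finset.range (4 * l), (kronSym (4 * (l : ℤ)) j : ℂ) *
      Complex.exp (2 * Real.pi * Complex.I * (j : ℂ) * (q : ℂ) / ((4 * l : ℕ) : ℂ)))
    (hτl : τl = ∑ j ∈ Finset.range l, (jacobiSym (j : ℤ) l : ℂ) *
      Complex.exp (2 * Real.pi * Complex.I * (j : ℂ) * (q : ℂ) / (l : ℂ))) :
    (Even q → τ4 = 0) ∧
    (q % 4 = 1 → τ4 = -2 * Complex.I * τl) ∧
    (q % 4 = 3 → τ4 = 2 * Complex.I * τl) := by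
  have hτ : τ4 = -(I ^ q - (-I) ^ q) * τl := by
    rw [hτ4, hτl, gaussSum_kronSym_four_mul hl, sum_χ₄_mul_exp]
  have hnegI4 : (-I) ^ 4 = 1 := by rw [neg_pow, I_pow_four]; norm_num
  refine ⟨fun hq => ?_, fun hq => ?_, fun hq => ?_⟩
  · rw [hτ, hq.neg_pow, sub_self, neg_zero, zero_mul]
  · rw [hτ, pow_eq_pow_mod q I_pow_four, pow_eq_pow_mod q hnegI4, hq]
    ring
  · rw [hτ, pow_eq_pow_mod q I_pow_four, pow_eq_pow_mod q hnegI4, hq]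
    linear_combination (-2 * I * τl) * I_sq

/-- for `l ≡ 3 (mod 4)` and `q > 0`, the Gauss sum of the Kronecker symbol
`χ^{(4l)}` modulo `4l` vanishes for even `q` and equals `∓2i τ(χ_l, q)` according to
`q ≡ 1, 3 (mod 4)`. -/
theorem stmt4 (l : ℕ) (hl : l % 4 = 3) (q : ℕ) (hq : 0 < q)
    (τ4 τl : ℂ)
    (hτ4 : τ4 = ∑ j ∈ Finset.range (4 * l), (kronSym (4 * (l : ℤ)) j : ℂ) *
      Complex.exp (2 * Real.pi * Complex.I * (j : ℂ) * (q : ℂ) / ((4 * l : ℕ) : ℂ)))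
    (hτl : τl = ∑ j ∈ Finset.range l, (jacobiSym (j : ℤ) l : ℂ) *
      Complex.exp (2 * Real.pi * Complex.I * (j : ℂ) * (q : ℂ) / (l : ℂ))) :
    (Even q → τ4 = 0) ∧
    (q % 4 = 1 → τ4 = -2 * Complex.I * τl) ∧
    (q % 4 = 3 → τ4 = 2 * Complex.I * τl) :=
  stmt4_general l hl q τ4 τl hτ4 hτl
end

section
/- Let a : ℕ → ℂ be multiplicative with a(p^k) = 0 for k > M and |a(p^k)| ≤ 2^M, and let z ∈ ℂ with Re(z) > 1/2. Then the Euler product P(z) = (1/2)·∏_{p>2} (1 + (1 - 1/p)·Σ_{k=1}^∞ a(p^{2k})/p^{2kz}) converges absolutely, and (1/2)·Σ_{(k,2)=1, k=□} a(k)·∏_{p|k}(1 - 1/p)·k^{-z} = P(z), where the sum runs over odd perfect squares k. -/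
open Finset Function

/-- The summand function. -/
noncomputable def stmt15F (a : ℕ → ℂ) (z : ℂ) (k : ℕ) : ℂ :=
  if Odd k ∧ IsSquare k then
    a k * (∏ p ∈ k.primeFactors, (1 - 1 / (p : ℂ))) / (k : ℂ) ^ z else 0

lemma stmt15_cpow (p n : ℕ) (z : ℂ) :
    ((p ^ n : ℕ) : ℂ) ^ z = (p : ℂ) ^ ((n : ℂ) * z) := by
  rw [Nat.cast_pow, Complex.cpow_nat_mul' (x := (p : ℂ)) (n := n)
    (by simp [Complex.natCast_arg]; linarith [Real.pi_pos])
    (by simp [Complex.natCast_arg]; linarith [Real.pi_pos])]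

lemma stmt15F_zero (a : ℕ → ℂ) (z : ℂ) : stmt15F a z 0 = 0 := by
  simp [stmt15F, Nat.odd_iff]

lemma stmt15F_one (a : ℕ → ℂ) (z : ℂ) (ha1 : a 1 = 1) : stmt15F a z 1 = 1 := by
  simp [stmt15F, ha1, IsSquare.one]

lemma stmt15F_mul (a : ℕ → ℂ) (z : ℂ) (ha1 : a 1 = 1)
    (hmul : ∀ m n : ℕ, Nat.Coprime m n → a (m * n) = a m * a n)
    (m n : ℕ) (h : Nat.Coprime m n) :
    stmt15F a z (m * n) = stmt15F a z m * stmt15F a z n := by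
  rcases eq_or_ne m 0 with rfl | hm0
  · have hn1 : n = 1 := Nat.coprime_zero_left n |>.mp h
    subst hn1
    simp [stmt15F_zero, stmt15F_one a z ha1]
  rcases eq_or_ne n 0 with rfl | hn0
  · have hm1 : m = 1 := Nat.coprime_zero_right m |>.mp h
    subst hm1
    simp [stmt15F_zero, stmt15F_one a z ha1]
  have hu : IsUnit (gcd m n) := Nat.isUnit_iff.mpr h
  have hiff : (Odd (m * n) ∧ IsSquare (m * n)) ↔
      (Odd m ∧ IsSquare m) ∧ (Odd n ∧ IsSquare n) := by
    constructor
    · rintro ⟨ho, r, hr⟩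
      have hsm : IsSquare m := by
        obtain ⟨d, hd⟩ := exists_eq_pow_of_mul_eq_pow hu (k := 2) (c := r) (by rw [hr]; ring)
        exact ⟨d, by rw [hd]; ring⟩
      have hsn : IsSquare n := by
        obtain ⟨d, hd⟩ := exists_eq_pow_of_mul_eq_pow (a := n) (b := m)
          (by rwa [gcd_comm]) (k := 2) (c := r) (by rw [mul_comm, hr]; ring)
        exact ⟨d, by rw [hd]; ring⟩
      obtain ⟨hom, hon⟩ := Nat.odd_mul.mp ho
      exact ⟨⟨hom, hsm⟩, ⟨hon, hsn⟩⟩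
    · rintro ⟨⟨hom, hsm⟩, ⟨hon, hsn⟩⟩
      exact ⟨Nat.odd_mul.mpr ⟨hom, hon⟩, hsm.mul hsn⟩
  by_cases hc : Odd (m * n) ∧ IsSquare (m * n)
  · obtain ⟨hcm, hcn⟩ := hiff.mp hc
    rw [stmt15F, stmt15F, stmt15F, if_pos hc, if_pos hcm, if_pos hcn]
    have hcpow : ((m * n : ℕ) : ℂ) ^ z = (m : ℂ) ^ z * (n : ℂ) ^ z := by
      rw [Nat.cast_mul, ← Complex.ofReal_natCast m, ← Complex.ofReal_natCast n,
        Complex.mul_cpow_ofReal_nonneg (Nat.cast_nonneg m) (Nat.cast_nonneg n)]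
    rw [hmul m n h, h.primeFactors_mul, Finset.prod_union h.disjoint_primeFactors, hcpow]
    ring
  · have h0 : stmt15F a z (m * n) = 0 := by rw [stmt15F, if_neg hc]
    rcases not_and_or.mp ((not_congr hiff).mp hc) with h' | h'
    · have hm' : stmt15F a z m = 0 := by rw [stmt15F, if_neg h']
      rw [h0, hm', zero_mul]
    · have hn' : stmt15F a z n = 0 := by rw [stmt15F, if_neg h']
      rw [h0, hn', mul_zero]

lemma stmt15F_odd_exp (a : ℕ → ℂ) (z : ℂ) {p : ℕ} (hp : p.Prime) {e : ℕ} (he : Odd e) :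
    stmt15F a z (p ^ e) = 0 := by
  rw [stmt15F, if_neg]
  rintro ⟨-, r, hr⟩
  have hr0 : r ≠ 0 := by
    rintro rfl
    exact (pow_ne_zero e hp.pos.ne') (by simpa using hr)
  have h1 : (p ^ e).factorization p = e := by
    rw [hp.factorization_pow]; simp
  rw [hr, Nat.factorization_mul hr0 hr0] at h1
  simp only [Finsupp.add_apply] at h1
  obtain ⟨j, hj⟩ := he
  omega

lemma stmt15F_two_pow (a : ℕ → ℂ) (z : ℂ) {e : ℕ} (he : e ≠ 0) :
    stmt15F a z (2 ^ e) = 0 := by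
  rw [stmt15F, if_neg]
  rintro ⟨ho, -⟩
  exact (Nat.not_odd_iff_even.mpr (Nat.even_pow.mpr ⟨even_two, he⟩)) ho

lemma stmt15F_prime_pow (a : ℕ → ℂ) (z : ℂ) {p : ℕ} (hp : p.Prime) (h2 : 2 < p) (j : ℕ) :
    stmt15F a z (p ^ (2 * (j + 1))) =
      (1 - 1 / (p : ℂ)) * (a (p ^ (2 * (j + 1))) / (p : ℂ) ^ ((2 * ((j : ℂ) + 1)) * z)) := by
  have hodd : Odd (p ^ (2 * (j + 1))) := (hp.odd_of_ne_two (by omega)).pow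
  have hsq : IsSquare (p ^ (2 * (j + 1))) := ⟨p ^ (j + 1), by rw [← pow_add]; congr 1; ring⟩
  rw [stmt15F, if_pos ⟨hodd, hsq⟩, Nat.primeFactors_prime_pow (by omega) hp,
    Finset.prod_singleton, stmt15_cpow]
  have hc : ((2 * (j + 1) : ℕ) : ℂ) = 2 * ((j : ℂ) + 1) := by push_cast; ring
  rw [hc]
  ring

lemma stmt15F_summable (a : ℕ → ℂ) (M : ℕ) (ha1 : a 1 = 1)
    (hmul : ∀ m n : ℕ, Nat.Coprime m n → a (m * n) = a m * a n)
    (hbd : ∀ p k : ℕ, p.Prime → ‖a (p ^ k)‖ ≤ 2 ^ M)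
    (z : ℂ) (hz : 1 / 2 < z.re) :
    Summable (fun n => ‖stmt15F a z n‖) := by
  set σ : ℝ := z.re with hσdef
  set δ : ℝ := σ - 1 / 2 with hδdef
  have hδ : 0 < δ := by simp only [hδdef]; linarith
  set t : ℝ := σ / 2 + 1 / 4 with htdef
  have h2t : 1 < 2 * t := by simp only [htdef]; linarith
  have h2σ : 2 * σ = 2 * t + δ := by simp only [htdef, hδdef]; ring
  set K : ℝ := 2 ^ (M + 1) with hKdef
  have hK1 : (1 : ℝ) ≤ K := one_le_pow₀ one_le_two
  have hK0 : (0 : ℝ) < K := lt_of_lt_of_le zero_lt_one hK1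
  obtain ⟨B, hB⟩ := exists_nat_gt (max 1 (K ^ (1 / δ)))
  have hBK : K ≤ (B : ℝ) ^ δ := by
    have h1 : K ^ (1 / δ) ≤ (B : ℝ) := ((le_max_right _ _).trans_lt hB).le
    calc K = (K ^ (1 / δ)) ^ δ := by
            rw [← Real.rpow_mul hK0.le, one_div_mul_cancel hδ.ne', Real.rpow_one]
      _ ≤ (B : ℝ) ^ δ :=
            Real.rpow_le_rpow (Real.rpow_nonneg hK0.le _) h1 hδ.le
  set C : ℝ := K ^ (B + 1) with hCdef
  have hC0 : (0 : ℝ) ≤ C := by positivity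
  have key : ∀ m : ℕ, ‖stmt15F a z (m * m)‖ ≤ C * (m : ℝ) ^ (-(2 * t)) := by
    intro m
    rcases Nat.eq_zero_or_pos m with rfl | hm
    · have h00 : (0 * 0 : ℕ) = 0 := rfl
      rw [h00, stmt15F_zero, norm_zero, Nat.cast_zero,
        Real.zero_rpow (show -(2 * t) ≠ 0 from ne_of_lt (by linarith)), mul_zero]
    have hm0 : m ≠ 0 := hm.ne'
    have hmm0 : m * m ≠ 0 := Nat.mul_ne_zero hm0 hm0
    have hmR : (0 : ℝ) < (m : ℝ) := by exact_mod_cast hm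
    by_cases hcond : Odd (m * m) ∧ IsSquare (m * m)
    swap
    · rw [stmt15F, if_neg hcond, norm_zero]
      positivity
    have hpf : (m * m).primeFactors = m.primeFactors := by
      rw [Nat.primeFactors_mul hm0 hm0, Finset.union_self]
    -- norm of denominator
    have hden : ‖((m * m : ℕ) : ℂ) ^ z‖ = (m : ℝ) ^ (2 * σ) := by
      rw [Complex.norm_natCast_cpow_of_pos (Nat.pos_of_ne_zero hmm0)]
      push_cast
      rw [Real.mul_rpow (Nat.cast_nonneg m) (Nat.cast_nonneg m),
        show 2 * σ = σ + σ by ring, Real.rpow_add hmR]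
    have hnorm : ‖stmt15F a z (m * m)‖ =
        ‖a (m * m)‖ * ‖∏ p ∈ (m * m).primeFactors, (1 - 1 / (p : ℂ))‖ / (m : ℝ) ^ (2 * σ) := by
      rw [stmt15F, if_pos hcond, norm_div, norm_mul, hden]
    -- bound the numerator parts
    have ha_bound : ‖a (m * m)‖ ≤ ∏ p ∈ m.primeFactors, (2 : ℝ) ^ M := by
      rw [Nat.multiplicative_factorization a hmul ha1 hmm0,
        Nat.prod_factorization_eq_prod_primeFactors, hpf]
      refine (Finset.norm_prod_le _ _).trans (Finset.prod_le_prod (fun _ _ => norm_nonneg _) ?_)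
      intro p hp
      exact hbd p _ (Nat.prime_of_mem_primeFactors hp)
    have hP_bound : ‖∏ p ∈ (m * m).primeFactors, (1 - 1 / (p : ℂ))‖ ≤
        ∏ p ∈ m.primeFactors, (2 : ℝ) := by
      rw [hpf]
      refine (Finset.norm_prod_le _ _).trans (Finset.prod_le_prod (fun _ _ => norm_nonneg _) ?_)
      intro p hp
      have hp1 : (1 : ℝ) ≤ (p : ℝ) := by
        exact_mod_cast (Nat.prime_of_mem_primeFactors hp).one_lt.le
      calc ‖1 - 1 / (p : ℂ)‖ ≤ ‖(1 : ℂ)‖ + ‖1 / (p : ℂ)‖ := norm_sub_le _ _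
        _ ≤ 2 := by
            rw [norm_one, norm_div, norm_one, Complex.norm_natCast]
            have : (1 : ℝ) / (p : ℝ) ≤ 1 := by
              rw [div_le_one (by linarith)]; exact hp1
            linarith
    have hnum : ‖a (m * m)‖ * ‖∏ p ∈ (m * m).primeFactors, (1 - 1 / (p : ℂ))‖ ≤
        ∏ p ∈ m.primeFactors, K := by
      calc ‖a (m * m)‖ * ‖∏ p ∈ (m * m).primeFactors, (1 - 1 / (p : ℂ))‖
          ≤ (∏ p ∈ m.primeFactors, (2 : ℝ) ^ M) * (∏ p ∈ m.primeFactors, (2 : ℝ)) :=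
            mul_le_mul ha_bound hP_bound (norm_nonneg _)
              (Finset.prod_nonneg (fun _ _ => by positivity))
        _ = ∏ p ∈ m.primeFactors, K := by
            rw [← Finset.prod_mul_distrib]
            exact Finset.prod_congr rfl (fun _ _ => by rw [hKdef]; ring)
    -- split the exponent
    have hsplit : (m : ℝ) ^ (-(2 * σ)) = (m : ℝ) ^ (-(2 * t)) * (m : ℝ) ^ (-δ) := by
      rw [← Real.rpow_add hmR]
      congr 1
      rw [h2σ]; ring
    have hrad : (m : ℝ) ^ (-δ) ≤ ∏ p ∈ m.primeFactors, (p : ℝ) ^ (-δ) := by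
      have hdvd : (∏ p ∈ m.primeFactors, p) ≤ m :=
        Nat.le_of_dvd hm (Nat.prod_primeFactors_dvd m)
      have hpos : 0 < (∏ p ∈ m.primeFactors, p : ℕ) :=
        Finset.prod_pos (fun p hp => (Nat.prime_of_mem_primeFactors hp).pos)
      have h1 : (m : ℝ) ^ (-δ) ≤ ((∏ p ∈ m.primeFactors, p : ℕ) : ℝ) ^ (-δ) :=
        Real.rpow_le_rpow_of_nonpos (by exact_mod_cast hpos) (by exact_mod_cast hdvd)
          (by linarith)
      refine h1.trans_eq ?_
      rw [Nat.cast_prod, ← Real.finset_prod_rpow _ _ (fun p _ => Nat.cast_nonneg p)]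
    have hprodC : ∏ p ∈ m.primeFactors, (K * (p : ℝ) ^ (-δ)) ≤ C := by
      have hstep : ∏ p ∈ m.primeFactors, (K * (p : ℝ) ^ (-δ)) ≤
          ∏ p ∈ m.primeFactors, (if p ≤ B then K else 1) := by
        refine Finset.prod_le_prod (fun p _ => by positivity) ?_
        intro p hp
        have hp1 : (1 : ℝ) ≤ (p : ℝ) := by
          exact_mod_cast (Nat.prime_of_mem_primeFactors hp).one_lt.le
        by_cases hpB : p ≤ B
        · rw [if_pos hpB]
          have : (p : ℝ) ^ (-δ) ≤ 1 :=
            Real.rpow_le_one_of_one_le_of_nonpos hp1 (by linarith)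
          calc K * (p : ℝ) ^ (-δ) ≤ K * 1 := by
                exact mul_le_mul_of_nonneg_left this hK0.le
            _ = K := mul_one K
        · rw [if_neg hpB]
          have hBp : (B : ℝ) ≤ (p : ℝ) := by exact_mod_cast (not_le.mp hpB).le
          have hKp : K ≤ (p : ℝ) ^ δ :=
            hBK.trans (Real.rpow_le_rpow (Nat.cast_nonneg B) hBp hδ.le)
          calc K * (p : ℝ) ^ (-δ) ≤ (p : ℝ) ^ δ * (p : ℝ) ^ (-δ) :=
                mul_le_mul_of_nonneg_right hKp (Real.rpow_nonneg (by linarith) _)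
            _ = 1 := by
                rw [← Real.rpow_add (by linarith), add_neg_cancel, Real.rpow_zero]
      refine hstep.trans ?_
      rw [← Finset.prod_filter]
      rw [Finset.prod_const]
      have hcard : (m.primeFactors.filter (· ≤ B)).card ≤ B + 1 := by
        have hsub : m.primeFactors.filter (· ≤ B) ⊆ Finset.range (B + 1) := by
          intro x hx
          rw [Finset.mem_range]
          have := (Finset.mem_filter.mp hx).2
          omega
        simpa using Finset.card_le_card hsub
      calc K ^ (m.primeFactors.filter (· ≤ B)).card ≤ K ^ (B + 1) :=
            pow_le_pow_right₀ hK1 hcard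
        _ = C := rfl
    -- put it together
    rw [hnorm, div_eq_mul_inv, ← Real.rpow_neg (Nat.cast_nonneg m)]
    calc ‖a (m * m)‖ * ‖∏ p ∈ (m * m).primeFactors, (1 - 1 / (p : ℂ))‖ * (m : ℝ) ^ (-(2 * σ))
        ≤ (∏ p ∈ m.primeFactors, K) * (m : ℝ) ^ (-(2 * σ)) :=
          mul_le_mul_of_nonneg_right hnum (Real.rpow_nonneg (Nat.cast_nonneg m) _)
      _ = (∏ p ∈ m.primeFactors, K) * ((m : ℝ) ^ (-(2 * t)) * (m : ℝ) ^ (-δ)) := by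
          rw [hsplit]
      _ ≤ (∏ p ∈ m.primeFactors, K) *
            ((m : ℝ) ^ (-(2 * t)) * ∏ p ∈ m.primeFactors, (p : ℝ) ^ (-δ)) := by
          refine mul_le_mul_of_nonneg_left ?_ (Finset.prod_nonneg fun _ _ => hK0.le)
          exact mul_le_mul_of_nonneg_left hrad (Real.rpow_nonneg (Nat.cast_nonneg m) _)
      _ = (∏ p ∈ m.primeFactors, (K * (p : ℝ) ^ (-δ))) * (m : ℝ) ^ (-(2 * t)) := by
          rw [Finset.prod_mul_distrib]; ring
      _ ≤ C * (m : ℝ) ^ (-(2 * t)) :=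
          mul_le_mul_of_nonneg_right hprodC (Real.rpow_nonneg (Nat.cast_nonneg m) _)
  have hsum2 : Summable (fun m : ℕ => C * (m : ℝ) ^ (-(2 * t))) :=
    (Real.summable_nat_rpow.mpr (by linarith)).mul_left C
  have hsum3 : Summable (fun m : ℕ => ‖stmt15F a z (m * m)‖) :=
    Summable.of_nonneg_of_le (fun _ => norm_nonneg _) key hsum2
  refine (Function.Injective.summable_iff (g := fun m : ℕ => m * m) ?_ ?_).mp hsum3
  · intro x y hxy
    exact Nat.mul_self_inj.mp hxy
  · intro x hx
    have hnsq : ¬ IsSquare x := fun ⟨r, hr⟩ => hx ⟨r, hr.symm⟩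
    rw [stmt15F, if_neg (fun hc => hnsq hc.2), norm_zero]

lemma stmt15F_local (a : ℕ → ℂ) (z : ℂ) (ha1 : a 1 = 1)
    {p : ℕ} (hp : p.Prime) (h2 : 2 < p) (hf : Summable (stmt15F a z)) :
    ∑' e : ℕ, stmt15F a z (p ^ e) =
      1 + (1 - 1 / (p : ℂ)) *
        ∑' k : ℕ, a (p ^ (2 * (k + 1))) / (p : ℂ) ^ ((2 * ((k : ℂ) + 1)) * z) := by
  have hS : Summable (fun e : ℕ => stmt15F a z (p ^ e)) :=
    hf.comp_injective (Nat.pow_right_injective hp.two_le)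
  rw [Summable.tsum_eq_zero_add hS]
  congr 1
  · rw [pow_zero]; exact stmt15F_one a z ha1
  · have hrw : ∑' k : ℕ, stmt15F a z (p ^ (2 * k + 1 + 1)) =
        ∑' e : ℕ, stmt15F a z (p ^ (e + 1)) := by
      refine Function.Injective.tsum_eq (g := fun k : ℕ => 2 * k + 1)
        (f := fun e : ℕ => stmt15F a z (p ^ (e + 1)))
        (fun x y hxy => by dsimp only at hxy; omega) ?_
      intro e he
      by_contra hre
      have heven : Even e := by
        rcases Nat.even_or_odd e with h | ⟨k, hk⟩
        · exact h
        · exact absurd ⟨k, by dsimp only; omega⟩ hre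
      exact he (stmt15F_odd_exp a z hp (heven.add_one))
    rw [← hrw]
    have hterm : ∀ k : ℕ, stmt15F a z (p ^ (2 * k + 1 + 1)) =
        (1 - 1 / (p : ℂ)) * (a (p ^ (2 * (k + 1))) / (p : ℂ) ^ ((2 * ((k : ℂ) + 1)) * z)) := by
      intro k
      rw [show 2 * k + 1 + 1 = 2 * (k + 1) by ring]
      exact stmt15F_prime_pow a z hp h2 k
    rw [tsum_congr hterm, tsum_mul_left]

lemma stmt15F_two (a : ℕ → ℂ) (z : ℂ) (ha1 : a 1 = 1) :
    ∑' e : ℕ, stmt15F a z (2 ^ e) = 1 := by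
  have h := hasSum_single (f := fun e : ℕ => stmt15F a z (2 ^ e)) 0
    (fun e he => stmt15F_two_pow a z he)
  rw [h.tsum_eq]
  show stmt15F a z (2 ^ 0) = 1
  rw [pow_zero]
  exact stmt15F_one a z ha1

/-- for a multiplicative `a` with `a(p^k) = 0` for `k > M` and
`|a(p^k)| ≤ 2^M`, and `Re(z) > 1/2`, the Euler product
`P(z) = (1/2) ∏_{p>2} (1 + (1 - 1/p) ∑_{k≥1} a(p^{2k}) p^{-2kz})` converges absolutely and
equals `(1/2) ∑_{k odd square} a(k) ∏_{p|k}(1 - 1/p) k^{-z}`. -/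
theorem stmt15 (a : ℕ → ℂ) (M : ℕ) (ha1 : a 1 = 1)
    (hmul : ∀ m n : ℕ, Nat.Coprime m n → a (m * n) = a m * a n)
    (hvan : ∀ p k : ℕ, p.Prime → M < k → a (p ^ k) = 0)
    (hbd : ∀ p k : ℕ, p.Prime → ‖a (p ^ k)‖ ≤ 2 ^ M)
    (z : ℂ) (hz : 1 / 2 < z.re) :
    Multipliable (fun p : {p : ℕ // p.Prime ∧ 2 < p} =>
      1 + (1 - 1 / ((p : ℕ) : ℂ)) *
        ∑' k : ℕ, a ((p : ℕ) ^ (2 * (k + 1))) / ((p : ℕ) : ℂ) ^ ((2 * ((k : ℂ) + 1)) * z)) ∧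
    Summable (fun k : ℕ => if Odd k ∧ IsSquare k then
      a k * (∏ p ∈ k.primeFactors, (1 - 1 / (p : ℂ))) / (k : ℂ) ^ z else 0) ∧
    (1 / 2 : ℂ) * ∑' k : ℕ, (if Odd k ∧ IsSquare k then
      a k * (∏ p ∈ k.primeFactors, (1 - 1 / (p : ℂ))) / (k : ℂ) ^ z else 0) =
    (1 / 2 : ℂ) * ∏' p : {p : ℕ // p.Prime ∧ 2 < p},
      (1 + (1 - 1 / ((p : ℕ) : ℂ)) *
        ∑' k : ℕ, a ((p : ℕ) ^ (2 * (k + 1))) / ((p : ℕ) : ℂ) ^ ((2 * ((k : ℂ) + 1)) * z)) := by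
  have hsumF : Summable (fun n => ‖stmt15F a z n‖) :=
    stmt15F_summable a M ha1 hmul hbd z hz
  have hF : Summable (stmt15F a z) := hsumF.of_norm
  have HPI := EulerProduct.eulerProduct_hasProd_mulIndicator (f := stmt15F a z)
    (stmt15F_one a z ha1) (fun {m n} h => stmt15F_mul a z ha1 hmul m n h)
    hsumF (stmt15F_zero a z)
  set G : ℕ → ℂ := Set.mulIndicator {p : ℕ | Nat.Prime p}
    (fun p => ∑' e : ℕ, stmt15F a z (p ^ e)) with hGdef
  have hsupp : Function.mulSupport G ⊆ {p : ℕ | p.Prime ∧ 2 < p} := by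
    intro p hp
    by_cases hprime : p.Prime
    · refine ⟨hprime, ?_⟩
      by_contra h2
      have hp2 : p = 2 := by have := hprime.two_le; omega
      subst hp2
      apply hp
      rw [hGdef, Set.mulIndicator_of_mem (show (2:ℕ) ∈ {p : ℕ | Nat.Prime p} from Nat.prime_two)]
      exact stmt15F_two a z ha1
    · exact absurd (Set.mulIndicator_of_notMem hprime _) hp
  have HP2 : HasProd (fun p : {p : ℕ // p.Prime ∧ 2 < p} => G (p : ℕ))
      (∑' n, stmt15F a z n) :=
    (hasProd_subtype_iff_of_mulSupport_subset hsupp).mpr HPI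
  have heq : (fun p : {p : ℕ // p.Prime ∧ 2 < p} => G (p : ℕ)) =
      (fun p : {p : ℕ // p.Prime ∧ 2 < p} =>
        1 + (1 - 1 / ((p : ℕ) : ℂ)) *
          ∑' k : ℕ, a ((p : ℕ) ^ (2 * (k + 1))) /
            ((p : ℕ) : ℂ) ^ ((2 * ((k : ℂ) + 1)) * z)) := by
    funext q
    obtain ⟨p, hp, h2⟩ := q
    show G p = _
    rw [hGdef, Set.mulIndicator_of_mem (show p ∈ {p : ℕ | Nat.Prime p} from hp)]
    exact stmt15F_local a z ha1 hp h2 hF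
  rw [heq] at HP2
  refine ⟨HP2.multipliable, hF, ?_⟩
  rw [HP2.tprod_eq]
  rfl
end

section
/- Let p be an odd prime, q_1 square-free, s, z complex with Re(s) > 1/2 and Re(z) > 1, and a(p^k) complex numbers bounded by 2^M. Using the Gauss sum bounds |G(χ_{p^k}, q_1 p^{2l})| ≤ p^k and G(χ_{p^k}, q_1 p^{2l}) = 0 for k ≥ 2l + 3, the tail sum satisfies |Σ_{k ≥ 0, l ≥ 1} a(p^k) G(χ_{p^k}, q_1 p^{2l}) p^{-kz - 2ls}| ≪_M |p^{-2s}| + |p^{-2s - z + 1}|, where the implied constant depends only on M. -/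
/-!
Write `σ = Re s`, `τ = Re z`. The `(k, l)` term has modulus at most `2^M p^{k(1-τ) - 2σ(l+1)}`
and vanishes unless `k < 2l + 5`. As `p ≥ 3` and `2σ > 1`, `p^{-2σl} ≤ 3^{-l}`, while
`p^{k(1-τ) - 2σ}` equals `|p^{-2s}|` for `k = 0` and is at most `|p^{-2s-z+1}|` for `k ≥ 1`.
So the series is dominated by `2^M (|p^{-2s}| + |p^{-2s-z+1}|)` times the summable majorant
`3^{-l} [k < 2l + 5]`, which does not depend on `p`.
-/

open Finset

lemma summable_ite_lt_of_summable_mul {g : ℕ → ℝ} (hg : 0 ≤ g) (N : ℕ → ℕ)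
    (h : Summable fun l => (N l : ℝ) * g l) :
    Summable fun kl : ℕ × ℕ => if kl.1 < N kl.2 then g kl.2 else 0 := by
  have hfiber (l : ℕ) : HasSum (fun k => if k < N l then g l else 0) (N l * g l) := by
    have : HasSum (fun k => if k < N l then g l else 0)
        (∑ k ∈ range (N l), if k < N l then g l else 0) :=
      hasSum_sum_of_ne_finset_zero fun k hk => if_neg (by simpa using hk)
    simpa [sum_ite_of_true (fun k hk => mem_range.1 hk)] using this
  rw [← (Equiv.prodComm ℕ ℕ).summable_iff]
  refine (summable_prod_of_nonneg fun kl => ?_).2 ⟨fun l => (hfiber l).summable, ?_⟩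
  · dsimp only [Function.comp_apply, Pi.zero_apply]
    split_ifs
    exacts [hg _, le_rfl]
  · convert h using 2 with l
    exact (hfiber l).tsum_eq

lemma rpow_tail_term_le {x σ τ : ℝ} (hx : 3 ≤ x) (hσ : 1 / 2 < σ) (hτ : 1 < τ) (k l : ℕ) :
    x ^ (k * (1 - τ) - 2 * σ * (l + 1)) ≤
      (x ^ (-2 * σ) + x ^ (-2 * σ - τ + 1)) * (1 / 3) ^ l := by
  have hx0 : 0 < x := by linarith
  have hx1 : 1 ≤ x := by linarith
  have hsplit : x ^ (k * (1 - τ) - 2 * σ * (l + 1)) =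
      x ^ (k * (1 - τ) - 2 * σ) * (x ^ (-2 * σ)) ^ l := by
    rw [← Real.rpow_mul_natCast hx0.le, ← Real.rpow_add hx0]
    ring_nf
  have hfirst : x ^ (k * (1 - τ) - 2 * σ) ≤ x ^ (-2 * σ) + x ^ (-2 * σ - τ + 1) := by
    rcases k.eq_zero_or_pos with rfl | hk
    · simp [Real.rpow_nonneg hx0.le]
    · have hk1 : (1 : ℝ) ≤ k := by exact_mod_cast hk
      have : x ^ (k * (1 - τ) - 2 * σ) ≤ x ^ (-2 * σ - τ + 1) :=
        Real.rpow_le_rpow_of_exponent_le hx1 (by nlinarith)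
      linarith [Real.rpow_nonneg hx0.le (-2 * σ)]
  have hbase : x ^ (-2 * σ) ≤ 1 / 3 :=
    calc x ^ (-2 * σ) ≤ x ^ (-1 : ℝ) := Real.rpow_le_rpow_of_exponent_le hx1 (by linarith)
      _ = x⁻¹ := Real.rpow_neg_one x
      _ ≤ 1 / 3 := by rw [one_div]; exact inv_anti₀ (by norm_num) hx
  rw [hsplit]
  exact mul_le_mul hfirst (pow_le_pow_left₀ (Real.rpow_nonneg hx0.le _) hbase l)
    (by positivity) (by positivity)

lemma norm_natCast_cpow_tail_term_le {p : ℕ} (hp : 3 ≤ p) {s z : ℂ} (hs : 1 / 2 < s.re)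
    (hz : 1 < z.re) (k l : ℕ) :
    (p : ℝ) ^ k * ‖(p : ℂ) ^ (-(k : ℂ) * z - 2 * ((l : ℂ) + 1) * s)‖ ≤
      (‖(p : ℂ) ^ (-2 * s)‖ + ‖(p : ℂ) ^ (-2 * s - z + 1)‖) * (1 / 3) ^ l := by
  have hp0 : 0 < p := by omega
  have hp3 : (3 : ℝ) ≤ p := by exact_mod_cast hp
  simp only [Complex.norm_natCast_cpow_of_pos hp0]
  convert rpow_tail_term_le hp3 hs hz k l using 3
  · rw [← Real.rpow_natCast, ← Real.rpow_add (by positivity)]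
    simp only [neg_mul, Complex.sub_re, Complex.neg_re, Complex.mul_re, Complex.natCast_re,
      Complex.natCast_im, zero_mul, sub_zero, Complex.re_ofNat, Complex.add_re, Complex.one_re,
      Complex.im_ofNat, Complex.add_im, Complex.one_im, add_zero, mul_zero, Complex.mul_im]
    congr 1
    ring
  all_goals simp

-- Indexed like the series, whose `(k, l)` term involves `G k (l + 1)`: hence `2l + 5`.
noncomputable def tailMajorant (kl : ℕ × ℕ) : ℝ :=
  if kl.1 < 2 * kl.2 + 5 then (1 / 3) ^ kl.2 else 0

lemma summable_tailMajorant : Summable tailMajorant := by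
  refine summable_ite_lt_of_summable_mul (fun l => by positivity) (fun l => 2 * l + 5) ?_
  have hgeom : ‖(1 / 3 : ℝ)‖ < 1 := by norm_num
  refine (((summable_pow_mul_geometric_of_norm_lt_one 1 hgeom).mul_left 2).add
    ((summable_geometric_of_norm_lt_one hgeom).mul_left 5)).congr fun l => ?_
  push_cast
  ring

lemma tsum_tailMajorant_pos : 0 < ∑' kl, tailMajorant kl :=
  summable_tailMajorant.tsum_pos (fun _ => by unfold tailMajorant; positivity) (0, 0)
    (by norm_num [tailMajorant])

/-- tail bound for the local double sum. With `G k l = G(χ_{p^k}, q₁ p^{2l})`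
satisfying `|G k l| ≤ p^k` and `G k l = 0` for `k ≥ 2l + 3`, and `|a(p^k)| ≤ 2^M`, one has
`|∑_{k ≥ 0, l ≥ 1} a(p^k) G k l p^{-kz - 2ls}| ≪_M |p^{-2s}| + |p^{-2s - z + 1}|`, the
implied constant depending only on `M`. -/
theorem stmt19 (M : ℕ) :
    ∃ C : ℝ, 0 < C ∧
      ∀ (p : ℕ), p.Prime → Odd p →
      ∀ (q1 : ℕ), Squarefree q1 →
      ∀ (s z : ℂ), 1 / 2 < s.re → 1 < z.re →
      ∀ (a : ℕ → ℂ), (∀ k : ℕ, ‖a k‖ ≤ 2 ^ M) →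
      ∀ (G : ℕ → ℕ → ℂ), (∀ k l : ℕ, ‖G k l‖ ≤ (p : ℝ) ^ k) →
        (∀ k l : ℕ, 2 * l + 3 ≤ k → G k l = 0) →
      ‖∑' kl : ℕ × ℕ, a kl.1 * G kl.1 (kl.2 + 1) *
          (p : ℂ) ^ (-(kl.1 : ℂ) * z - 2 * ((kl.2 : ℂ) + 1) * s)‖ ≤
        C * (‖(p : ℂ) ^ (-2 * s)‖ + ‖(p : ℂ) ^ (-2 * s - z + 1)‖) := by
  refine ⟨2 ^ M * ∑' kl, tailMajorant kl, by positivity [tsum_tailMajorant_pos], ?_⟩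
  intro p hp hodd q1 _ s z hs hz a ha G hG hG0
  have hp3 : 3 ≤ p := by obtain ⟨m, rfl⟩ := hodd; have := hp.two_le; omega
  set X := ‖(p : ℂ) ^ (-2 * s)‖ + ‖(p : ℂ) ^ (-2 * s - z + 1)‖
  have hterm (kl : ℕ × ℕ) : ‖a kl.1 * G kl.1 (kl.2 + 1) *
      (p : ℂ) ^ (-(kl.1 : ℂ) * z - 2 * ((kl.2 : ℂ) + 1) * s)‖ ≤ 2 ^ M * X * tailMajorant kl := by
    obtain ⟨k, l⟩ := kl
    unfold tailMajorant
    split_ifs with hk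
    · have hpow := norm_natCast_cpow_tail_term_le hp3 hs hz k l
      calc _ = ‖a k‖ * (‖G k (l + 1)‖ *
            ‖(p : ℂ) ^ (-(k : ℂ) * z - 2 * ((l : ℂ) + 1) * s)‖) := by
            rw [norm_mul, norm_mul, mul_assoc]
        _ ≤ 2 ^ M * (X * (1 / 3) ^ l) :=
            mul_le_mul (ha k) ((mul_le_mul_of_nonneg_right (hG k (l + 1)) (norm_nonneg _)).trans
              hpow) (by positivity) (by positivity)
        _ = _ := by ring
    · simp [hG0 k (l + 1) (by omega)]
  calc _ ≤ 2 ^ M * X * ∑' kl, tailMajorant kl :=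
        tsum_of_norm_bounded (summable_tailMajorant.hasSum.mul_left _) hterm
    _ = _ := by ring
end
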